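/- arXiv:1803.02458 — 3 statements merged into one kernel-verified Lean document; each statement's English description precedes it below -/
import Mathlib

section
/- Let K be a real symmetric n×n matrix with eigenvalues λ₁ ≥ λ₂ ≥ ⋯ ≥ λₙ (listed in decreasing order with multiplicity). Then for every real n×k matrix H satisfying HᵀH = Iₖ, one has tr(HᵀKH) ≤ λ₁ + λ₂ + ⋯ + λₖ. -/
/-!
With `G = Uᵀ H` the trace becomes `∑ i, lam i * P i i` for the symmetric idempotent `P = G Gᵀ`.
The diagonal of such a `P` lies in `[0, 1]` (as `P i i = ∑ j, P i j ^ 2 ≥ P i i ^ 2`) and sums to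
`tr P = k`; among all such weights, `∑ i, lam i * s i` is largest when the weight sits on the `k`
largest eigenvalues.
-/

open Matrix

open Finset in
theorem Finset.sum_mul_le_sum_of_forall_le_of_forall_ge {ι R : Type*} [Fintype ι] [DecidableEq ι]
    [CommRing R] [LinearOrder R] [IsStrictOrderedRing R]
    (A : Finset ι) (lam s : ι → R) (c : R) (hA : ∀ i ∈ A, c ≤ lam i)
    (hAc : ∀ i ∉ A, lam i ≤ c) (hs0 : ∀ i, 0 ≤ s i) (hs1 : ∀ i, s i ≤ 1)
    (hsum : ∑ i, s i = #A) :
    ∑ i, lam i * s i ≤ ∑ i ∈ A, lam i := by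
  have hterm : ∀ i, lam i * s i ≤ (if i ∈ A then lam i - c else 0) + c * s i := by
    intro i
    split_ifs with hi
    · nlinarith [hA i hi, hs1 i]
    · nlinarith [hAc i hi, hs0 i]
  calc ∑ i, lam i * s i
      ≤ ∑ i, ((if i ∈ A then lam i - c else 0) + c * s i) := sum_le_sum fun i _ => hterm i
    _ = ∑ i ∈ A, (lam i - c) + c * #A := by
        rw [sum_add_distrib, ← mul_sum, hsum, sum_ite_mem, univ_inter]
    _ = ∑ i ∈ A, lam i := by
        rw [sum_sub_distrib, sum_const, nsmul_eq_mul]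
        ring

theorem Fin.sum_mul_le_sum_castLE_of_antitone {R : Type*}
    [CommRing R] [LinearOrder R] [IsStrictOrderedRing R] {n k : ℕ} (hk : k ≤ n)
    {lam : Fin n → R} (hlam : Antitone lam) (s : Fin n → R) (hs0 : ∀ i, 0 ≤ s i)
    (hs1 : ∀ i, s i ≤ 1) (hsum : ∑ i, s i = k) :
    ∑ i, lam i * s i ≤ ∑ j : Fin k, lam (Fin.castLE hk j) := by
  have hmem : ∀ i : Fin n, i ∈ Finset.univ.map (Fin.castLEEmb hk) ↔ (i : ℕ) < k := fun i =>
    ⟨fun h => by obtain ⟨j, -, rfl⟩ := Finset.mem_map.1 h; exact j.isLt,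
     fun h => Finset.mem_map.2 ⟨⟨i, h⟩, Finset.mem_univ _, rfl⟩⟩
  obtain ⟨c, hc_le, hc_ge⟩ : ∃ c, (∀ i : Fin n, (i : ℕ) < k → c ≤ lam i) ∧
      ∀ i : Fin n, k ≤ (i : ℕ) → lam i ≤ c := by
    rcases hk.lt_or_eq with hlt | rfl
    · exact ⟨lam ⟨k, hlt⟩, fun i hi => hlam (Fin.le_def.2 hi.le), fun i hi => hlam hi⟩
    · obtain ⟨c, hc⟩ := (Set.finite_range lam).bddBelow
      exact ⟨c, fun i _ => hc ⟨i, rfl⟩, fun i hi => absurd i.isLt hi.not_gt⟩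
  calc ∑ i, lam i * s i ≤ ∑ i ∈ Finset.univ.map (Fin.castLEEmb hk), lam i :=
        Finset.sum_mul_le_sum_of_forall_le_of_forall_ge _ lam s c
          (fun i hi => hc_le i ((hmem i).1 hi))
          (fun i hi => hc_ge i (not_lt.1 (hi ∘ (hmem i).2))) hs0 hs1 (by simpa using hsum)
    _ = ∑ j : Fin k, lam (Fin.castLE hk j) := Finset.sum_map _ _ _

section IdempotentSymm

variable {ι R : Type*} [Fintype ι] [CommRing R] {P : Matrix ι ι R}

theorem Matrix.IsSymm.diag_eq_sum_sq_of_isIdempotentElem (hP : P.IsSymm)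
    (hPP : IsIdempotentElem P) (i : ι) : P i i = ∑ j, P i j ^ 2 := by
  conv_lhs => rw [← hPP.eq]
  simp only [mul_apply, sq]
  refine Finset.sum_congr rfl fun j _ => ?_
  rw [hP.apply i j]

variable [LinearOrder R] [IsStrictOrderedRing R]

theorem Matrix.IsSymm.diag_nonneg_of_isIdempotentElem (hP : P.IsSymm)
    (hPP : IsIdempotentElem P) (i : ι) : 0 ≤ P i i := by
  rw [hP.diag_eq_sum_sq_of_isIdempotentElem hPP]
  exact Finset.sum_nonneg fun j _ => sq_nonneg _

theorem Matrix.IsSymm.diag_le_one_of_isIdempotentElem (hP : P.IsSymm)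
    (hPP : IsIdempotentElem P) (i : ι) : P i i ≤ 1 := by
  have hsq : P i i ^ 2 ≤ P i i := by
    conv_rhs => rw [hP.diag_eq_sum_sq_of_isIdempotentElem hPP]
    exact Finset.single_le_sum (f := fun j => P i j ^ 2) (fun j _ => sq_nonneg _)
      (Finset.mem_univ i)
  nlinarith [hP.diag_nonneg_of_isIdempotentElem hPP i]

end IdempotentSymm

section OrthonormalColumns

variable {m n R : Type*} [Fintype m] [Fintype n] [CommRing R] {G : Matrix m n R}

theorem Matrix.isIdempotentElem_mul_transpose_self [DecidableEq n] (hG : Gᵀ * G = 1) :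
    IsIdempotentElem (G * Gᵀ) := by
  rw [IsIdempotentElem, Matrix.mul_assoc, ← Matrix.mul_assoc Gᵀ, hG, Matrix.one_mul]

theorem Matrix.trace_mul_transpose_self [DecidableEq n] (hG : Gᵀ * G = 1) :
    (G * Gᵀ).trace = Fintype.card n := by
  rw [trace_mul_comm, hG, trace_one]

theorem Matrix.trace_transpose_mul_diagonal_mul [DecidableEq m] (d : m → R) (G : Matrix m n R) :
    (Gᵀ * diagonal d * G).trace = ∑ i, d i * (G * Gᵀ) i i := by
  rw [Matrix.mul_assoc, trace_mul_comm, Matrix.mul_assoc]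
  simp only [trace, diag_apply, diagonal_mul]

end OrthonormalColumns

theorem kyFan_upper_bound_general {n k : ℕ} (hk : k ≤ n)
    (K U : Matrix (Fin n) (Fin n) ℝ) (lam : Fin n → ℝ)
    (hU' : U * Uᵀ = 1)
    (hspec : K = U * Matrix.diagonal lam * Uᵀ)
    (hlam : Antitone lam) :
    ∀ H : Matrix (Fin n) (Fin k) ℝ, Hᵀ * H = 1 →
      (Hᵀ * K * H).trace ≤ ∑ i : Fin k, lam (Fin.castLE hk i) := by
  intro H hH
  set G := Uᵀ * H
  have hG : Gᵀ * G = 1 := by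
    rw [transpose_mul, transpose_transpose, Matrix.mul_assoc, ← Matrix.mul_assoc U, hU',
      Matrix.one_mul, hH]
  have hKH : Hᵀ * K * H = Gᵀ * diagonal lam * G := by
    simp only [G, hspec, transpose_mul, transpose_transpose, Matrix.mul_assoc]
  have hPsymm : (G * Gᵀ).IsSymm := by simp [IsSymm, transpose_mul]
  have hPidem := isIdempotentElem_mul_transpose_self hG
  rw [hKH, trace_transpose_mul_diagonal_mul]
  refine Fin.sum_mul_le_sum_castLE_of_antitone hk hlam _
    (hPsymm.diag_nonneg_of_isIdempotentElem hPidem)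
    (hPsymm.diag_le_one_of_isIdempotentElem hPidem) ?_
  simpa [trace] using trace_mul_transpose_self hG

/-- Upper-bound part of the Ky Fan trace maximization theorem:
for a real symmetric `n × n` matrix `K` with eigenvalues `lam 0 ≥ lam 1 ≥ ⋯`
(listed in decreasing order with multiplicity, i.e. `K = U * diagonal lam * Uᵀ`
for an orthogonal `U` and an antitone `lam`), every real `n × k` matrix `H`
with `Hᵀ * H = 1` satisfies `tr (Hᵀ * K * H) ≤ lam 0 + ⋯ + lam (k-1)`. -/
theorem kyFan_upper_bound {n k : ℕ} (hk : k ≤ n)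
    (K U : Matrix (Fin n) (Fin n) ℝ) (lam : Fin n → ℝ)
    (hKsymm : K.IsSymm)
    (hU : Uᵀ * U = 1) (hU' : U * Uᵀ = 1)
    (hspec : K = U * Matrix.diagonal lam * Uᵀ)
    (hlam : Antitone lam) :
    ∀ H : Matrix (Fin n) (Fin k) ℝ, Hᵀ * H = 1 →
      (Hᵀ * K * H).trace ≤ ∑ i : Fin k, lam (Fin.castLE hk i) :=
  kyFan_upper_bound_general hk K U lam hU' hspec hlam
end

section
/- Let K be a real symmetric n×n matrix with eigenvalues λ₁ ≥ ⋯ ≥ λₙ in decreasing order and corresponding orthonormal eigenvectors u₁, …, uₙ. Let Uₖ = [u₁, …, uₖ] be the n×k matrix whose columns are the eigenvectors for the k largest eigenvalues, and let Q be any k×k real orthogonal matrix. Then H = UₖQ satisfies HᵀH = Iₖ and tr(HᵀKH) = λ₁ + λ₂ + ⋯ + λₖ, so H attains the maximum of tr(HᵀKH) over all n×k matrices H with HᵀH = Iₖ. -/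
open Matrix

private lemma conj_submatrix {n k : ℕ} (f : Fin k → Fin n) (U C : Matrix (Fin n) (Fin n) ℝ) :
    (U.submatrix id f)ᵀ * C * (U.submatrix id f) = (Uᵀ * C * U).submatrix f f := by
  ext i j
  simp only [Matrix.mul_apply, Matrix.transpose_apply, Matrix.submatrix_apply, id_eq,
    Finset.sum_mul, Finset.mul_sum]

private lemma split_sum {n k : ℕ} (hk : k ≤ n) (f : Fin n → ℝ) :
    ∑ i : Fin k, f (Fin.castLE hk i) = ∑ i : Fin n, if (i : ℕ) < k then f i else 0 := by
  rw [← Finset.sum_filter]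
  have himg : Finset.univ.filter (fun i : Fin n => (i : ℕ) < k)
      = Finset.univ.image (Fin.castLE hk) := by
    ext i
    simp only [Finset.mem_filter, Finset.mem_image, Finset.mem_univ, true_and]
    constructor
    · intro h; exact ⟨⟨i, h⟩, rfl⟩
    · rintro ⟨j, rfl⟩; simp only [Fin.coe_castLE]; exact j.2
  rw [himg, Finset.sum_image (fun a _ b _ h => Fin.castLE_injective hk h)]

private lemma sum_bound {n k : ℕ} (hk : k ≤ n) (lam : Fin n → ℝ) (hlam : Antitone lam)
    (s : Fin n → ℝ) (h0 : ∀ i, 0 ≤ s i) (h1 : ∀ i, s i ≤ 1)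
    (hsum : ∑ i, s i = (k : ℝ)) :
    ∑ i, lam i * s i ≤ ∑ i : Fin k, lam (Fin.castLE hk i) := by
  rcases Nat.eq_zero_or_pos k with hk0 | hkpos
  · subst hk0
    have : ∀ i, s i = 0 := by
      intro i
      have := Finset.sum_eq_zero_iff_of_nonneg (fun i _ => h0 i) |>.mp (by simpa using hsum)
      exact this i (Finset.mem_univ i)
    simp [this]
  · set t : ℝ := lam ⟨k - 1, (Nat.sub_lt hkpos one_pos).trans_le hk⟩ with ht
    have key : ∀ i : Fin n, (lam i - t) * s i ≤ if (i : ℕ) < k then lam i - t else 0 := by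
      intro i
      by_cases h : (i : ℕ) < k
      · simp only [h, if_true]
        have hle : lam i - t ≥ 0 := by
          have : i ≤ (⟨k - 1, (Nat.sub_lt hkpos one_pos).trans_le hk⟩ : Fin n) := by
            exact Fin.mk_le_of_le_val (Nat.le_sub_one_of_lt h)
          have := hlam this
          linarith
        nlinarith [h1 i, h0 i]
      · simp only [h, if_false]
        have hle : lam i - t ≤ 0 := by
          have : (⟨k - 1, (Nat.sub_lt hkpos one_pos).trans_le hk⟩ : Fin n) ≤ i := by
            apply Fin.mk_le_of_le_val
            omega
          have := hlam this
          linarith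
        exact mul_nonpos_of_nonpos_of_nonneg hle (h0 i)
    have h2 : ∑ i, (lam i - t) * s i ≤ ∑ i : Fin k, (lam (Fin.castLE hk i) - t) := by
      rw [split_sum hk (fun i => lam i - t)]
      exact Finset.sum_le_sum (fun i _ => key i)
    have h3 : ∑ i, (lam i - t) * s i = ∑ i, lam i * s i - t * (k : ℝ) := by
      rw [← hsum, Finset.mul_sum, ← Finset.sum_sub_distrib]
      exact Finset.sum_congr rfl (fun i _ => by ring)
    have h4 : ∑ i : Fin k, (lam (Fin.castLE hk i) - t)
        = ∑ i : Fin k, lam (Fin.castLE hk i) - t * (k : ℝ) := by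
      rw [Finset.sum_sub_distrib]
      simp [mul_comm]
    linarith

/-- Attainment part of the Ky Fan trace maximization theorem:
if `K` is real symmetric with eigenvalues `lam` in decreasing order and
corresponding orthonormal eigenvectors given by the columns of an orthogonal
matrix `U` (i.e. `K * U = U * diagonal lam`), `Uₖ` consists of the first `k`
columns of `U`, and `Q` is any `k × k` orthogonal matrix, then `H = Uₖ * Q`
satisfies `Hᵀ * H = 1`, `tr (Hᵀ * K * H) = lam 0 + ⋯ + lam (k-1)`, and `H`
attains the maximum of `tr (H'ᵀ * K * H')` over all `H'` with `H'ᵀ * H' = 1`. -/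
theorem kyFan_attained {n k : ℕ} (hk : k ≤ n)
    (K U : Matrix (Fin n) (Fin n) ℝ) (lam : Fin n → ℝ)
    (hKsymm : K.IsSymm)
    (hU : Uᵀ * U = 1) (hU' : U * Uᵀ = 1)
    (heig : K * U = U * Matrix.diagonal lam)
    (hlam : Antitone lam)
    (Q : Matrix (Fin k) (Fin k) ℝ) (hQ : Qᵀ * Q = 1) (hQ' : Q * Qᵀ = 1)
    (H : Matrix (Fin n) (Fin k) ℝ)
    (hH : H = U.submatrix id (Fin.castLE hk) * Q) :
    Hᵀ * H = 1 ∧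
    (Hᵀ * K * H).trace = ∑ i : Fin k, lam (Fin.castLE hk i) ∧
    ∀ H' : Matrix (Fin n) (Fin k) ℝ, H'ᵀ * H' = 1 →
      (H'ᵀ * K * H').trace ≤ (Hᵀ * K * H).trace := by
  set f : Fin k → Fin n := Fin.castLE hk with hf
  set Uk : Matrix (Fin n) (Fin k) ℝ := U.submatrix id f with hUk
  -- Uₖᵀ Uₖ = 1
  have hsub1 : (1 : Matrix (Fin n) (Fin n) ℝ).submatrix f f = 1 := by
    ext i j
    simp [Matrix.one_apply, (Fin.castLE_injective hk).eq_iff, hf]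
  have hUkUk : Ukᵀ * Uk = 1 := by
    have := conj_submatrix f U (1 : Matrix (Fin n) (Fin n) ℝ)
    rw [Matrix.mul_one, Matrix.mul_one, hU] at this
    rw [hUk, this, hsub1]
  -- Uₖᵀ K Uₖ = diagonal lam restricted
  have hM : Ukᵀ * K * Uk = (Matrix.diagonal lam).submatrix f f := by
    have hKU : Uᵀ * K * U = Matrix.diagonal lam := by
      rw [Matrix.mul_assoc, heig, ← Matrix.mul_assoc, hU, Matrix.one_mul]
    rw [hUk, conj_submatrix f U K, hKU]
  have part1 : Hᵀ * H = 1 := by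
    rw [hH, Matrix.transpose_mul, Matrix.mul_assoc, ← Matrix.mul_assoc Ukᵀ, hUkUk,
      Matrix.one_mul, hQ]
  have part2 : (Hᵀ * K * H).trace = ∑ i : Fin k, lam (Fin.castLE hk i) := by
    rw [hH]
    have : (Uk * Q)ᵀ * K * (Uk * Q) = Qᵀ * ((Ukᵀ * K * Uk) * Q) := by
      rw [Matrix.transpose_mul]
      simp only [Matrix.mul_assoc]
    rw [this, Matrix.trace_mul_comm, Matrix.mul_assoc, hQ', Matrix.mul_one, hM]
    simp [Matrix.trace, Matrix.diag, Matrix.diagonal_apply_eq, hf]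
  refine ⟨part1, part2, ?_⟩
  intro H' hH'
  rw [part2]
  have hK : K = U * Matrix.diagonal lam * Uᵀ := by
    calc K = K * (U * Uᵀ) := by rw [hU', Matrix.mul_one]
    _ = (K * U) * Uᵀ := by rw [Matrix.mul_assoc]
    _ = U * Matrix.diagonal lam * Uᵀ := by rw [heig]
  set W : Matrix (Fin n) (Fin k) ℝ := Uᵀ * H' with hW
  have hWW : Wᵀ * W = 1 := by
    rw [hW, Matrix.transpose_mul, Matrix.transpose_transpose, Matrix.mul_assoc,
      ← Matrix.mul_assoc U, hU', Matrix.one_mul, hH']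
  have htr : (H'ᵀ * K * H').trace = (Wᵀ * (Matrix.diagonal lam * W)).trace := by
    rw [hK, hW, Matrix.transpose_mul, Matrix.transpose_transpose]
    simp only [Matrix.mul_assoc]
  set s : Fin n → ℝ := fun i => ∑ j, (W i j) ^ 2 with hs
  have htr2 : (Wᵀ * (Matrix.diagonal lam * W)).trace = ∑ i, lam i * s i := by
    simp only [Matrix.trace, Matrix.diag, Matrix.mul_apply, Matrix.transpose_apply,
      Matrix.diagonal_mul, hs]
    rw [Finset.sum_comm]
    refine Finset.sum_congr rfl (fun i _ => ?_)
    rw [Finset.mul_sum]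
    refine Finset.sum_congr rfl (fun j _ => ?_)
    rw [show (∑ x, Matrix.diagonal lam i x * W x j) = lam i * W i j from by
      simp [Matrix.diagonal_apply, ite_mul]]
    ring
  have hsum : ∑ i, s i = (k : ℝ) := by
    have : ∑ i, s i = (Wᵀ * W).trace := by
      simp only [Matrix.trace, Matrix.diag, Matrix.mul_apply, Matrix.transpose_apply, hs]
      rw [Finset.sum_comm]
      exact Finset.sum_congr rfl (fun i _ => Finset.sum_congr rfl (fun j _ => by ring))
    rw [this, hWW]
    simp [Matrix.trace]
  have h0 : ∀ i, 0 ≤ s i := fun i => Finset.sum_nonneg (fun j _ => sq_nonneg _)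
  have h1 : ∀ i, s i ≤ 1 := by
    intro i
    set P : Matrix (Fin n) (Fin n) ℝ := W * Wᵀ with hP
    have hPP : P * P = P := by
      rw [hP, Matrix.mul_assoc, ← Matrix.mul_assoc Wᵀ, hWW, Matrix.one_mul]
    have hPsymm : Pᵀ = P := by
      rw [hP, Matrix.transpose_mul, Matrix.transpose_transpose]
    have hPii : P i i = s i := by
      simp only [hP, Matrix.mul_apply, Matrix.transpose_apply, hs]
      exact Finset.sum_congr rfl (fun j _ => by ring)
    have hPii2 : P i i = ∑ j, (P i j) ^ 2 := by
      conv_lhs => rw [← hPP]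
      simp only [Matrix.mul_apply]
      refine Finset.sum_congr rfl (fun j _ => ?_)
      have h2 : P j i = P i j := by
        have := congrFun (congrFun hPsymm i) j
        simpa [Matrix.transpose_apply] using this
      rw [h2]; ring
    have hle : (s i) ^ 2 ≤ s i := by
      calc (s i) ^ 2 = (P i i) ^ 2 := by rw [hPii]
      _ ≤ ∑ j, (P i j) ^ 2 := Finset.single_le_sum (f := fun j => (P i j) ^ 2)
          (fun j _ => sq_nonneg _) (Finset.mem_univ i)
      _ = P i i := hPii2.symm
      _ = s i := hPii
    nlinarith [h0 i, sq_nonneg (s i - 1)]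
  calc (H'ᵀ * K * H').trace = ∑ i, lam i * s i := by rw [htr, htr2]
  _ ≤ ∑ i : Fin k, lam (Fin.castLE hk i) := sum_bound hk lam hlam s h0 h1 hsum
end

section
/- Let X⁽ᵛ⁾ be an n×p_v real matrix for v = 1, …, m, let X = [X⁽¹⁾, …, X⁽ᵐ⁾] be the n×p column-concatenated matrix with p = p₁ + ⋯ + p_m, and let X = U D Vᵀ be a singular value decomposition, where U is an n×n orthogonal matrix, V is a p×p orthogonal matrix, and D is an n×p matrix that is zero off the main diagonal with nonnegative diagonal entries σ₁ ≥ σ₂ ≥ ⋯ (singular values in decreasing order). For k ≤ min(n,p), let Uₖ be the n×k matrix of the first k columns of U, Dₖ the k×k diagonal matrix with diagonal σ₁, …, σₖ, and V_{1:k}⁽ᵛ⁾ the p_v×k block of V_{1:k} (the p×k matrix of the first k columns of V) consisting of the rows indexed p₁+⋯+p_{v−1}+1 through p₁+⋯+p_v. Let K⁽ᵛ⁾ = X⁽ᵛ⁾(X⁽ᵛ⁾)ᵀ, let Q be any k×k orthogonal matrix, and set H = UₖQ. Then tr(HᵀK⁽ᵛ⁾H) = tr(V_{1:k}⁽ᵛ⁾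 Dₖᵀ Dₖ (V_{1:k}⁽ᵛ⁾)ᵀ). -/
/-!
Write `Uₖ` for the first `k` columns of `U`. From `X = U D Vᵀ` and `Uᵀ U = 1` we get `Uᵀ X = D Vᵀ`;
restricting to the first `k` rows and to the columns of block `v` gives `Uₖᵀ X⁽ᵛ⁾ = Dₖ (V_{1:k}⁽ᵛ⁾)ᵀ`,
since the first `k` rows of the rectangular diagonal `D` only see the first `k` columns of `Vᵀ`.
Hence `Hᵀ K⁽ᵛ⁾ H = Qᵀ A Aᵀ Q` with `A = Dₖ (V_{1:k}⁽ᵛ⁾)ᵀ`, and the trace is invariant under the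
orthogonal conjugation by `Q` and under `tr (A Aᵀ) = tr (Aᵀ A)`.
-/

open Matrix

namespace Matrix

theorem trace_transpose_mul_mul_of_mul_transpose_eq_one {R ι : Type*} [CommSemiring R]
    [Fintype ι] [DecidableEq ι] {Q : Matrix ι ι R} (hQ : Q * Qᵀ = 1) (A : Matrix ι ι R) :
    (Qᵀ * A * Q).trace = A.trace := by
  rw [trace_mul_cycle, hQ, Matrix.one_mul]

theorem submatrix_castLE_mul_of_eq_ite {R ι : Type*} [Semiring R] {n p k : ℕ}
    (hkn : k ≤ n) (hkp : k ≤ p) {D : Matrix (Fin n) (Fin p) R} {σ : ℕ → R}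
    (hD : ∀ i j, D i j = if (i : ℕ) = (j : ℕ) then σ (i : ℕ) else 0) (B : Matrix (Fin p) ι R) :
    (D * B).submatrix (Fin.castLE hkn) id =
      diagonal (fun i : Fin k => σ (i : ℕ)) * B.submatrix (Fin.castLE hkp) id := by
  ext i c
  rw [submatrix_apply, diagonal_mul, mul_apply, Finset.sum_eq_single (Fin.castLE hkp i)]
  · simp [hD]
  · intro j _ hj
    rw [hD, if_neg fun h => hj (Fin.ext (by simpa using h.symm)), zero_mul]
  · simp

end Matrix

theorem trace_HKH_eq_trace_VDDV_general {n m k : ℕ} (p : Fin m → ℕ)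
    (hk1 : k ≤ n) (hk2 : k ≤ ∑ v, p v)
    (Xv : ∀ v : Fin m, Matrix (Fin n) (Fin (p v)) ℝ)
    (X : Matrix (Fin n) ((v : Fin m) × Fin (p v)) ℝ)
    (hX : ∀ i q, X i q = Xv q.1 i q.2)
    (U : Matrix (Fin n) (Fin n) ℝ)
    (V : Matrix ((v : Fin m) × Fin (p v)) (Fin (∑ v, p v)) ℝ)
    (D : Matrix (Fin n) (Fin (∑ v, p v)) ℝ)
    (σ : ℕ → ℝ)
    (hU : Uᵀ * U = 1)
    (hD : ∀ i j, D i j = if (i : ℕ) = (j : ℕ) then σ (i : ℕ) else 0)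
    (hsvd : X = U * D * Vᵀ)
    (Q : Matrix (Fin k) (Fin k) ℝ) (hQ' : Q * Qᵀ = 1)
    (H : Matrix (Fin n) (Fin k) ℝ)
    (hH : H = U.submatrix id (Fin.castLE hk1) * Q) :
    ∀ v : Fin m,
      (Hᵀ * (Xv v * (Xv v)ᵀ) * H).trace =
        ((V.submatrix (fun r : Fin (p v) => (⟨v, r⟩ : (w : Fin m) × Fin (p w)))
            (Fin.castLE hk2)) *
          (Matrix.diagonal (fun i : Fin k => σ (i : ℕ)))ᵀ *
          Matrix.diagonal (fun i : Fin k => σ (i : ℕ)) *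
          (V.submatrix (fun r : Fin (p v) => (⟨v, r⟩ : (w : Fin m) × Fin (p w)))
            (Fin.castLE hk2))ᵀ).trace := by
  intro v
  set W := V.submatrix (fun r : Fin (p v) => (⟨v, r⟩ : (w : Fin m) × Fin (p w))) (Fin.castLE hk2)
  set Dk := diagonal (fun i : Fin k => σ (i : ℕ))
  have hUX : Uᵀ * X = D * Vᵀ := by
    rw [hsvd, ← Matrix.mul_assoc, ← Matrix.mul_assoc, hU, Matrix.one_mul]
  have hXv : Xv v = X.submatrix id (Sigma.mk v) := by
    ext i r
    simp [hX]
  have hA : (U.submatrix id (Fin.castLE hk1))ᵀ * Xv v = Dk * Wᵀ := by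
    rw [hXv, transpose_submatrix, ← submatrix_mul _ _ _ _ _ Function.bijective_id, hUX]
    change ((D * Vᵀ).submatrix (Fin.castLE hk1) id).submatrix id (Sigma.mk v) = _
    rw [submatrix_castLE_mul_of_eq_ite hk1 hk2 hD]
    rfl
  have hconj : Hᵀ * (Xv v * (Xv v)ᵀ) * H = Qᵀ * ((Dk * Wᵀ) * (Dk * Wᵀ)ᵀ) * Q := by
    rw [hH, ← hA]
    simp only [transpose_mul, transpose_transpose, Matrix.mul_assoc]
  rw [hconj, trace_transpose_mul_mul_of_mul_transpose_eq_one hQ', trace_mul_comm]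
  simp only [transpose_mul, transpose_transpose, Matrix.mul_assoc]

/-- Equation (S3) in the proof of Proposition S2 of the paper: with
`K⁽ᵛ⁾ = X⁽ᵛ⁾ * (X⁽ᵛ⁾)ᵀ`, `H = Uₖ * Q` for an orthogonal `Q`, and a singular
value decomposition `X = U * D * Vᵀ` of the concatenated matrix, one has
`tr (Hᵀ * K⁽ᵛ⁾ * H) = tr (V_{1:k}⁽ᵛ⁾ * Dₖᵀ * Dₖ * (V_{1:k}⁽ᵛ⁾)ᵀ)`. -/
theorem trace_HKH_eq_trace_VDDV {n m k : ℕ} (p : Fin m → ℕ)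
    (hk1 : k ≤ n) (hk2 : k ≤ ∑ v, p v)
    (Xv : ∀ v : Fin m, Matrix (Fin n) (Fin (p v)) ℝ)
    (X : Matrix (Fin n) ((v : Fin m) × Fin (p v)) ℝ)
    (hX : ∀ i q, X i q = Xv q.1 i q.2)
    (U : Matrix (Fin n) (Fin n) ℝ)
    (V : Matrix ((v : Fin m) × Fin (p v)) (Fin (∑ v, p v)) ℝ)
    (D : Matrix (Fin n) (Fin (∑ v, p v)) ℝ)
    (σ : ℕ → ℝ)
    (hU : Uᵀ * U = 1) (hU' : U * Uᵀ = 1)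
    (hV : Vᵀ * V = 1) (hV' : V * Vᵀ = 1)
    (hD : ∀ i j, D i j = if (i : ℕ) = (j : ℕ) then σ (i : ℕ) else 0)
    (hσ : Antitone σ) (hσ0 : ∀ i, 0 ≤ σ i)
    (hsvd : X = U * D * Vᵀ)
    (Q : Matrix (Fin k) (Fin k) ℝ) (hQ : Qᵀ * Q = 1) (hQ' : Q * Qᵀ = 1)
    (H : Matrix (Fin n) (Fin k) ℝ)
    (hH : H = U.submatrix id (Fin.castLE hk1) * Q) :
    ∀ v : Fin m,
      (Hᵀ * (Xv v * (Xv v)ᵀ) * H).trace =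
        ((V.submatrix (fun r : Fin (p v) => (⟨v, r⟩ : (w : Fin m) × Fin (p w)))
            (Fin.castLE hk2)) *
          (Matrix.diagonal (fun i : Fin k => σ (i : ℕ)))ᵀ *
          Matrix.diagonal (fun i : Fin k => σ (i : ℕ)) *
          (V.submatrix (fun r : Fin (p v) => (⟨v, r⟩ : (w : Fin m) × Fin (p w)))
            (Fin.castLE hk2))ᵀ).trace :=
  trace_HKH_eq_trace_VDDV_general p hk1 hk2 Xv X hX U V D σ hU hD hsvd Q hQ' H hH
end
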